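/- arXiv:1904.06144 — 2 statements merged into one kernel-verified Lean document; each statement's English description precedes it below -/
import Mathlib

section
/- Let R be a stochastic matrix on a countable state space S with stationary distribution π that is uniformly ergodic with constants C > 0 and ρ ∈ (0,1), i.e. |R^n(u,v) − π_v| ≤ C ρ^n for all n ≥ 1 and u,v ∈ S. Then for every probability distribution μ on S, every v ∈ S, and all integers a, b ≥ 1, the 'covariance along two branches' satisfies |Σ_{s∈S} μ(s) R^a(s,v) R^b(s,v) − (μR^a)(v) · (μR^b)(v)| ≤ 2C ρ^{max(a,b)} ≤ 2C ρ^{(a+b)/2}. -/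
/-!
Write `f = R^a(·, v)` and `g = R^b(·, v)` and say `a ≤ b`. The covariance of `f`
and `g` under `μ` does not change when the constant `π_v` is subtracted from `g`, and
`|g - π_v| ≤ Cρ^b` by uniform ergodicity, while `0 ≤ f ≤ 1`. Hence both `E[f (g - π_v)]` and
`E[f] E[g - π_v]` are at most `Cρ^b = Cρ^{max(a,b)}` in absolute value.
-/

open MeasureTheory ProbabilityTheory Filter Topology

/-- The `n`-step transition matrix `R^n` of a Markov kernel `R` on the countable
state space `S` (matrix powers, with sums as `tsum` over `S`). -/
noncomputable def matPow {S : Type*} [DecidableEq S] (R : S → S → ℝ) : ℕ → S → S → ℝ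
  | 0 => fun u v => if u = v then 1 else 0
  | n + 1 => fun u v => ∑' s, matPow R n u s * R s v

section WeightedCovariance

variable {S : Type*}

noncomputable def weightedCov (μ f g : S → ℝ) : ℝ :=
  ∑' s, μ s * (f s * g s) - (∑' s, μ s * f s) * ∑' s, μ s * g s

theorem weightedCov_comm (μ f g : S → ℝ) : weightedCov μ f g = weightedCov μ g f := by
  simp only [weightedCov, mul_comm (f _), mul_comm (∑' s, μ s * f s)]

theorem weightedCov_sub_const {μ f g : S → ℝ} (hμ : HasSum μ 1)
    (hf : Summable fun s => μ s * f s) (hg : Summable fun s => μ s * g s)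
    (hfg : Summable fun s => μ s * (f s * g s)) (c : ℝ) :
    weightedCov μ f (fun s => g s - c) = weightedCov μ f g := by
  have hfgc : ∑' s, μ s * (f s * (g s - c)) =
      ∑' s, μ s * (f s * g s) - (∑' s, μ s * f s) * c := by
    simp only [mul_sub, ← mul_assoc, ← tsum_mul_right]
    exact (hfg.congr fun s => by ring).tsum_sub (hf.mul_right c)
  have hgc : ∑' s, μ s * (g s - c) = ∑' s, μ s * g s - c := by
    simp only [mul_sub]
    rw [hg.tsum_sub (hμ.summable.mul_right c), tsum_mul_right, hμ.tsum_eq, one_mul]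
  simp only [weightedCov, hfgc, hgc]
  ring

theorem norm_mul_le_mul_of_abs_le {μ f : S → ℝ} {ε : ℝ} (hμ0 : ∀ s, 0 ≤ μ s)
    (hf : ∀ s, |f s| ≤ ε) (s : S) : ‖μ s * f s‖ ≤ μ s * ε := by
  rw [Real.norm_eq_abs, abs_mul, abs_of_nonneg (hμ0 s)]
  exact mul_le_mul_of_nonneg_left (hf s) (hμ0 s)

theorem summable_mul_of_abs_le {μ f : S → ℝ} {ε : ℝ} (hμ0 : ∀ s, 0 ≤ μ s) (hμ : Summable μ)
    (hf : ∀ s, |f s| ≤ ε) : Summable fun s => μ s * f s :=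
  (hμ.mul_right ε).of_norm_bounded (norm_mul_le_mul_of_abs_le hμ0 hf)

theorem abs_tsum_mul_le {μ f : S → ℝ} {ε : ℝ} (hμ0 : ∀ s, 0 ≤ μ s) (hμ : HasSum μ 1)
    (hf : ∀ s, |f s| ≤ ε) : |∑' s, μ s * f s| ≤ ε := by
  simpa using tsum_of_norm_bounded (hμ.mul_right ε) (norm_mul_le_mul_of_abs_le hμ0 hf)

theorem abs_weightedCov_le {μ f g : S → ℝ} {c ε : ℝ} (hμ0 : ∀ s, 0 ≤ μ s) (hμ : HasSum μ 1)
    (hf0 : ∀ s, 0 ≤ f s) (hf1 : ∀ s, f s ≤ 1) (hg : ∀ s, |g s - c| ≤ ε) :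
    |weightedCov μ f g| ≤ 2 * ε := by
  have hf : ∀ s, |f s| ≤ 1 := fun s => abs_le.2 ⟨by linarith [hf0 s], hf1 s⟩
  have hfg : ∀ s, |f s * (g s - c)| ≤ ε := fun s => by
    rw [abs_mul]
    exact (mul_le_of_le_one_left (abs_nonneg _) (hf s)).trans (hg s)
  have hgb : ∀ s, |g s| ≤ |c| + ε := fun s => by
    have := abs_sub_abs_le_abs_sub (g s) c
    linarith [hg s]
  have hfgb : ∀ s, |f s * g s| ≤ |c| + ε := fun s => by
    rw [abs_mul]
    exact (mul_le_of_le_one_left (abs_nonneg _) (hf s)).trans (hgb s)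
  rw [← weightedCov_sub_const hμ (summable_mul_of_abs_le hμ0 hμ.summable hf)
    (summable_mul_of_abs_le hμ0 hμ.summable hgb) (summable_mul_of_abs_le hμ0 hμ.summable hfgb) c]
  calc |weightedCov μ f fun s => g s - c|
      ≤ |∑' s, μ s * (f s * (g s - c))| + |∑' s, μ s * f s| * |∑' s, μ s * (g s - c)| := by
        rw [weightedCov, ← abs_mul]
        exact abs_sub _ _
    _ ≤ ε + 1 * ε := by
        gcongr
        · exact abs_tsum_mul_le hμ0 hμ hfg
        · exact abs_tsum_mul_le hμ0 hμ hf
        · exact abs_tsum_mul_le hμ0 hμ hg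
    _ = 2 * ε := by ring

end WeightedCovariance

section StochasticMatrix

variable {S : Type*} {R : S → S → ℝ}

theorem hasSum_tsum_mul_of_stochastic (hR0 : ∀ u v, 0 ≤ R u v) (hR1 : ∀ u, HasSum (R u) 1)
    {p : S → ℝ} {m : ℝ} (hp0 : ∀ s, 0 ≤ p s) (hp : HasSum p m) :
    HasSum (fun w => ∑' s, p s * R s w) m := by
  -- Tonelli: the nonnegative family `p s * R s w` sums to `m` on `S × S`, so also by columns.
  have hR_le : ∀ s w, R s w ≤ 1 := fun s w => le_hasSum (hR1 s) w fun w' _ => hR0 s w'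
  have hrow : ∀ s, HasSum (fun w => p s * R s w) (p s) := fun s => by
    simpa using (hR1 s).mul_left (p s)
  have hsummable : Summable fun q : S × S => p q.1 * R q.1 q.2 :=
    (summable_prod_of_nonneg fun q => mul_nonneg (hp0 q.1) (hR0 q.1 q.2)).2
      ⟨fun s => (hrow s).summable, by simpa only [(hrow _).tsum_eq] using hp.summable⟩
  have hprod : HasSum (fun q : S × S => p q.1 * R q.1 q.2) m := by
    convert hsummable.hasSum
    exact hp.unique (hsummable.hasSum.prod_fiberwise hrow)
  have hcol : ∀ w, Summable fun s => p s * R s w := fun w =>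
    hp.summable.of_nonneg_of_le (fun s => mul_nonneg (hp0 s) (hR0 s w))
      fun s => mul_le_of_le_one_right (hp0 s) (hR_le s w)
  exact ((Equiv.prodComm S S).hasSum_iff.2 hprod).prod_fiberwise fun w => (hcol w).hasSum

variable [DecidableEq S]

theorem matPow_nonneg (hR0 : ∀ u v, 0 ≤ R u v) (n : ℕ) (u v : S) : 0 ≤ matPow R n u v := by
  induction n generalizing v with
  | zero => unfold matPow; split_ifs <;> norm_num
  | succ n ih => exact tsum_nonneg fun s => mul_nonneg (ih s) (hR0 s v)

theorem hasSum_matPow (hR0 : ∀ u v, 0 ≤ R u v) (hR1 : ∀ u, HasSum (R u) 1) (n : ℕ) (u : S) :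
    HasSum (matPow R n u) 1 := by
  induction n with
  | zero => exact hasSum_ite_eq' u 1
  | succ n ih => exact hasSum_tsum_mul_of_stochastic hR0 hR1 (matPow_nonneg hR0 n u) ih

theorem matPow_le_one (hR0 : ∀ u v, 0 ≤ R u v) (hR1 : ∀ u, HasSum (R u) 1) (n : ℕ) (u v : S) :
    matPow R n u v ≤ 1 :=
  le_hasSum (hasSum_matPow hR0 hR1 n u) v fun w _ => matPow_nonneg hR0 n u w

end StochasticMatrix

theorem pow_max_le_rpow_add_div_two {ρ : ℝ} (h0 : 0 < ρ) (h1 : ρ ≤ 1) (a b : ℕ) :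
    ρ ^ max a b ≤ ρ ^ (((a : ℝ) + b) / 2) := by
  rw [← Real.rpow_natCast]
  apply Real.rpow_le_rpow_of_exponent_ge h0 h1
  push_cast
  linarith [le_max_left (a : ℝ) b, le_max_right (a : ℝ) b]

theorem branching_covariance_bound_general {S : Type*} [DecidableEq S]
    (R : S → S → ℝ) (hRnonneg : ∀ u v, 0 ≤ R u v) (hRrow : ∀ u, HasSum (R u) 1)
    (pi : S → ℝ)
    (C ρ : ℝ) (hC : 0 < C) (hρ : ρ ∈ Set.Ioo (0 : ℝ) 1)
    (hunifErg : ∀ n : ℕ, 1 ≤ n → ∀ u v, |matPow R n u v - pi v| ≤ C * ρ ^ n)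
    (μd : S → ℝ) (hμdnonneg : ∀ s, 0 ≤ μd s) (hμdsum : HasSum μd 1)
    (v : S) (a b : ℕ) (ha : 1 ≤ a) (hb : 1 ≤ b) :
    |(∑' s, μd s * (matPow R a s v * matPow R b s v)) -
        (∑' s, μd s * matPow R a s v) * (∑' s, μd s * matPow R b s v)| ≤
      2 * C * ρ ^ max a b ∧
    2 * C * ρ ^ max a b ≤ 2 * C * ρ ^ (((a : ℝ) + b) / 2) := by
  have cov_le : ∀ m n, 1 ≤ n → |weightedCov μd (fun s => matPow R m s v) (fun s => matPow R n s v)|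
      ≤ 2 * C * ρ ^ n := fun m n hn => by
    rw [mul_assoc]
    exact abs_weightedCov_le hμdnonneg hμdsum (fun s => matPow_nonneg hRnonneg m s v)
      (fun s => matPow_le_one hRnonneg hRrow m s v) (fun s => hunifErg n hn s v)
  refine ⟨?_, ?_⟩
  · change |weightedCov μd (fun s => matPow R a s v) (fun s => matPow R b s v)| ≤ _
    rcases le_total a b with hab | hba
    · rw [max_eq_right hab]
      exact cov_le a b hb
    · rw [max_eq_left hba, weightedCov_comm]
      exact cov_le b a ha
  · exact mul_le_mul_of_nonneg_left (pow_max_le_rpow_add_div_two hρ.1 hρ.2.le a b)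
      (by positivity)

/-- **Lemma 3.1 (matrix form).** For a uniformly ergodic stochastic matrix `R` with
stationary distribution `pi` and constants `C > 0`, `ρ ∈ (0,1)`, the covariance of a
branching Markov chain along two branches of lengths `a` and `b` emanating from a
common vertex with distribution `μd` is bounded by `2Cρ^{max(a,b)} ≤ 2Cρ^{(a+b)/2}`. -/
theorem branching_covariance_bound {S : Type*} [Countable S] [DecidableEq S]
    (R : S → S → ℝ) (hRnonneg : ∀ u v, 0 ≤ R u v) (hRrow : ∀ u, HasSum (R u) 1)
    (pi : S → ℝ) (hpinonneg : ∀ v, 0 ≤ pi v) (hpisum : HasSum pi 1)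
    (hstationary : ∀ v, HasSum (fun s => pi s * R s v) (pi v))
    (C ρ : ℝ) (hC : 0 < C) (hρ : ρ ∈ Set.Ioo (0 : ℝ) 1)
    (hunifErg : ∀ n : ℕ, 1 ≤ n → ∀ u v, |matPow R n u v - pi v| ≤ C * ρ ^ n)
    (μd : S → ℝ) (hμdnonneg : ∀ s, 0 ≤ μd s) (hμdsum : HasSum μd 1)
    (v : S) (a b : ℕ) (ha : 1 ≤ a) (hb : 1 ≤ b) :
    |(∑' s, μd s * (matPow R a s v * matPow R b s v)) -
        (∑' s, μd s * matPow R a s v) * (∑' s, μd s * matPow R b s v)| ≤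
      2 * C * ρ ^ max a b ∧
    2 * C * ρ ^ max a b ≤ 2 * C * ρ ^ (((a : ℝ) + b) / 2) :=
  branching_covariance_bound_general R hRnonneg hRrow pi C ρ hC hρ hunifErg μd hμdnonneg hμdsum v a
    b ha hb
end

section
/- Fix t > 0 and r ∈ (0,1), and let A_n(r) := E[Σ_{u ∈ T'_n} r^{d(u)}] for the weighted random recursive tree with root weight t. Then for every n ≥ 0, A_n(r) admits the closed form A_n(r) = r Σ_{k=0}^n (t/(k+t)) ∏_{j=k+1}^n (1 + r/(j+t)) = rt Σ_{k=0}^n [Γ(n+1+t+r)/Γ(n+1+t)] · [Γ(k+t)/Γ(k+1+t+r)], where Γ is the Gamma function. -/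
/-!
Conditioning on the parent of `w_n`, which is independent of `w_0, …, w_{n-1}`, gives
`E r^{d(w_n)} = r (t + ∑_{j<n} E r^{d(w_j)}) / (n + t)`. Summing over the vertices, `A_n`
satisfies the linear recursion `A_n = (1 + r/(n+t)) A_{n-1} + rt/(n+t)`, which variation of
constants solves as the product formula; the Gamma form is the same product rewritten with
`Γ(x + 1) = x Γ(x)`.
-/

open MeasureTheory ProbabilityTheory Filter Topology

instance : MeasurableSpace (Option ℕ) := ⊤

/-- Depth (graph distance to the root `o`) of the vertex `w n` in the recursive tree
whose parent map is `P` : `P n = none` means the parent of `w n` is the root `o`, and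
`P n = some j` (with `j < n`) means the parent of `w n` is `w j`. -/
def wrrtDepth (P : ℕ → Option ℕ) : ℕ → ℕ
  | n =>
    match P n with
    | none => 1
    | some j => if h : j < n then wrrtDepth P j + 1 else 1
termination_by n => n

/-- The parent of a vertex (`none` is the root `o`, `some n` is the vertex `w n`). -/
def wrrtParent (P : ℕ → Option ℕ) : Option ℕ → Option ℕ
  | none => none
  | some n =>
    match P n with
    | none => none
    | some j => if j < n then some j else none

/-- Depth of a vertex of the recursive tree (`none` is the root `o`). -/
def wrrtDepthV (P : ℕ → Option ℕ) : Option ℕ → ℕ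
  | none => 0
  | some n => wrrtDepth P n

def wrrtDistAux (P : ℕ → Option ℕ) : ℕ → Option ℕ → Option ℕ → ℕ
  | 0, _, _ => 0
  | fuel + 1, u, w =>
    if u = w then 0
    else if wrrtDepthV P u < wrrtDepthV P w then wrrtDistAux P fuel u (wrrtParent P w) + 1
    else wrrtDistAux P fuel (wrrtParent P u) w + 1

/-- Graph distance `d(u,w)` between two vertices of the recursive tree with parent
map `P`: repeatedly move the deeper vertex to its parent until the two meet. -/
def wrrtDist (P : ℕ → Option ℕ) (u w : Option ℕ) : ℕ :=
  wrrtDistAux P (wrrtDepthV P u + wrrtDepthV P w) u w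

/-- `A_n(r) = E [ ∑_{u ∈ T'_n} r^{d(u)} ]`, the sum over the non-root vertices
`w_0, …, w_n` of the random recursive tree with (random) parent maps `p · ω`. -/
noncomputable def wrrtA {Ω : Type*} [MeasurableSpace Ω] (μ : Measure Ω) (r : ℝ)
    (p : ℕ → Ω → Option ℕ) (n : ℕ) : ℝ :=
  ∫ ω, (∑ u ∈ Finset.range (n + 1), r ^ wrrtDepth (fun k => p k ω) u) ∂μ

/-- `B_n(r) = E [ ∑_{u,w ∈ T'_n} r^{d(u,w)} ]`, the sum over all ordered pairs of
non-root vertices of the random recursive tree with (random) parent maps `p · ω`. -/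
noncomputable def wrrtB {Ω : Type*} [MeasurableSpace Ω] (μ : Measure Ω) (r : ℝ)
    (p : ℕ → Ω → Option ℕ) (n : ℕ) : ℝ :=
  ∫ ω, (∑ u ∈ Finset.range (n + 1), ∑ w ∈ Finset.range (n + 1),
      r ^ wrrtDist (fun k => p k ω) (some u) (some w)) ∂μ

theorem wrrtDepth_of_eq_none {P : ℕ → Option ℕ} {n : ℕ} (h : P n = none) :
    wrrtDepth P n = 1 := by
  rw [wrrtDepth, h]

theorem wrrtDepth_of_eq_some {P : ℕ → Option ℕ} {n j : ℕ} (h : P n = some j) (hj : j < n) :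
    wrrtDepth P n = wrrtDepth P j + 1 := by
  rw [wrrtDepth, h]
  exact dif_pos hj

theorem wrrtDepth_congr {P Q : ℕ → Option ℕ} {n : ℕ} (h : ∀ k ≤ n, P k = Q k) :
    wrrtDepth P n = wrrtDepth Q n := by
  induction n using Nat.strong_induction_on with
  | _ n ih =>
    rw [wrrtDepth, wrrtDepth, h n le_rfl]
    cases Q n with
    | none => rfl
    | some j =>
      by_cases hj : j < n
      · simp only [dif_pos hj, ih j hj fun k hk => h k (hk.trans hj.le)]
      · simp only [dif_neg hj]

theorem wrrtDepth_le (P : ℕ → Option ℕ) (n : ℕ) : wrrtDepth P n ≤ n + 1 := by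
  induction n using Nat.strong_induction_on with
  | _ n ih =>
    rw [wrrtDepth]
    cases P n with
    | none => simp
    | some j =>
      by_cases hj : j < n
      · simpa only [dif_pos hj] using Nat.succ_le_succ ((ih j hj).trans hj)
      · simp [dif_neg hj]

theorem pow_wrrtDepth_eq {R : Type*} [Semiring R] (r : R) {P : ℕ → Option ℕ} {n : ℕ}
    (hP : P n ∈ insert none ((Finset.range n).image some)) :
    r ^ wrrtDepth P n = r * (({none} : Set (Option ℕ)).indicator 1 (P n) +
      ∑ j ∈ Finset.range n,
        ({some j} : Set (Option ℕ)).indicator 1 (P n) * r ^ wrrtDepth P j) := by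
  simp only [Finset.mem_insert, Finset.mem_image, Finset.mem_range] at hP
  rcases hP with hnone | ⟨j, hj, hsome⟩
  · simp [wrrtDepth_of_eq_none hnone, hnone]
  · rw [wrrtDepth_of_eq_some hsome.symm hj, ← hsome, Finset.sum_eq_single j]
    · simp [pow_succ']
    · intro i _ hij; simp [hij.symm]
    · simp [hj]

theorem eq_sum_mul_prod_Ioc_of_rec {R : Type*} [CommSemiring R] {x c d : ℕ → R}
    (h0 : x 0 = d 0) (hsucc : ∀ n, x (n + 1) = c (n + 1) * x n + d (n + 1)) (n : ℕ) :
    x n = ∑ k ∈ Finset.range (n + 1), d k * ∏ j ∈ Finset.Ioc k n, c j := by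
  induction n with
  | zero => simp [h0]
  | succ n ih =>
    rw [hsucc, ih, Finset.sum_range_succ _ (n + 1), Finset.Ioc_self, Finset.prod_empty, mul_one,
      Finset.mul_sum]
    congr 1
    refine Finset.sum_congr rfl fun k hk => ?_
    rw [Finset.prod_Ioc_succ_top (Finset.mem_range_succ_iff.mp hk)]
    ring

theorem Real.Gamma_nat_add_one_add_eq_mul_prod {s : ℝ} (hs : -1 < s) {k n : ℕ} (hkn : k ≤ n) :
    Gamma (n + 1 + s) = Gamma (k + 1 + s) * ∏ j ∈ Finset.Ioc k n, ((j : ℝ) + s) := by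
  induction n, hkn using Nat.le_induction with
  | base => simp
  | succ n hkn ih =>
    have hpos : 0 < (n : ℝ) + 1 + s := by linarith [(n.cast_nonneg : (0 : ℝ) ≤ n)]
    rw [Finset.prod_Ioc_succ_top hkn, ← mul_assoc, ← ih, Nat.cast_succ, add_right_comm _ 1 s,
      Gamma_add_one hpos.ne']
    ring

theorem div_mul_prod_one_add_div_eq_Gamma {t r : ℝ} (ht : 0 < t) (hr : 0 ≤ r) {k n : ℕ}
    (hkn : k ≤ n) :
    t / (k + t) * ∏ j ∈ Finset.Ioc k n, (1 + r / ((j : ℝ) + t)) =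
      t * (Real.Gamma (n + 1 + t + r) / Real.Gamma (n + 1 + t) *
        (Real.Gamma (k + t) / Real.Gamma (k + 1 + t + r))) := by
  have hpos : ∀ j : ℕ, 0 < (j : ℝ) + t := fun j => by positivity
  have hprod : ∏ j ∈ Finset.Ioc k n, (1 + r / ((j : ℝ) + t)) =
      (∏ j ∈ Finset.Ioc k n, ((j : ℝ) + t + r)) / ∏ j ∈ Finset.Ioc k n, ((j : ℝ) + t) := by
    rw [← Finset.prod_div_distrib]
    refine Finset.prod_congr rfl fun j _ => ?_
    field_simp [(hpos j).ne']
  have hGtr := Real.Gamma_nat_add_one_add_eq_mul_prod (s := t + r) (by linarith) hkn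
  have hGt := Real.Gamma_nat_add_one_add_eq_mul_prod (s := t) (by linarith) hkn
  have hGk : Real.Gamma (k + 1 + t) = (k + t) * Real.Gamma (k + t) := by
    rw [add_right_comm, Real.Gamma_add_one (hpos k).ne']
  simp only [← add_assoc] at hGtr
  have : Real.Gamma (k + t) ≠ 0 := (Real.Gamma_pos_of_pos (hpos k)).ne'
  have : Real.Gamma (k + 1 + t + r) ≠ 0 := (Real.Gamma_pos_of_pos (by positivity)).ne'
  have : ∏ j ∈ Finset.Ioc k n, ((j : ℝ) + t) ≠ 0 :=
    Finset.prod_ne_zero_iff.mpr fun j _ => (hpos j).ne'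
  rw [hprod, hGtr, hGt, hGk]
  field_simp

instance : MeasurableSingletonClass (Option ℕ) := ⟨fun _ => trivial⟩

section RandomTree

variable {Ω : Type*} [MeasurableSpace Ω] {μ : Measure Ω} {p : ℕ → Ω → Option ℕ}

theorem measurable_wrrtDepth (hp : ∀ n, Measurable (p n)) (n : ℕ) :
    Measurable fun ω => wrrtDepth (fun k => p k ω) n := by
  let S := Finset.range (n + 1)
  have hrestrict : (fun ω => wrrtDepth (fun k => p k ω) n) =
      (fun x : S → Option ℕ =>
          wrrtDepth (fun k => if h : k ∈ S then x ⟨k, h⟩ else none) n) ∘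
        fun ω (i : S) => p i ω := by
    funext ω
    exact wrrtDepth_congr fun k hk => by simp [S, Nat.lt_succ_of_le hk]
  rw [hrestrict]
  exact (measurable_of_countable _).comp (measurable_pi_lambda _ fun i => hp i)

theorem integrable_pow_wrrtDepth [IsFiniteMeasure μ] (hp : ∀ n, Measurable (p n)) (r : ℝ)
    (n : ℕ) : Integrable (fun ω => r ^ wrrtDepth (fun k => p k ω) n) μ := by
  have hmeas := (measurable_of_countable fun d : ℕ => r ^ d).comp (measurable_wrrtDepth hp n)
  refine .of_bound hmeas.aestronglyMeasurable (max 1 |r| ^ (n + 1)) (ae_of_all _ fun ω => ?_)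
  rw [norm_pow, Real.norm_eq_abs]
  calc |r| ^ wrrtDepth (fun k => p k ω) n ≤ max 1 |r| ^ wrrtDepth (fun k => p k ω) n :=
        pow_le_pow_left₀ (abs_nonneg r) (le_max_right 1 |r|) _
    _ ≤ max 1 |r| ^ (n + 1) := pow_le_pow_right₀ (le_max_left 1 |r|) (wrrtDepth_le _ n)

theorem indepFun_parent_wrrtDepth (hp : ∀ n, Measurable (p n))
    (hindep : iIndepFun (m := fun _ : ℕ => (inferInstance : MeasurableSpace (Option ℕ))) p μ)
    {j n : ℕ} (hjn : j < n) : IndepFun (p n) (fun ω => wrrtDepth (fun k => p k ω) j) μ := by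
  have hblock := hindep.indepFun_finset {n} (Finset.range n) (by simp) hp
  let parent : (({n} : Finset ℕ) → Option ℕ) → Option ℕ :=
    fun x => x ⟨n, Finset.mem_singleton_self n⟩
  let depth : ((Finset.range n) → Option ℕ) → ℕ := fun x =>
    wrrtDepth (fun k => if h : k ∈ Finset.range n then x ⟨k, h⟩ else none) j
  convert hblock.comp (measurable_of_countable parent) (measurable_of_countable depth) using 1
  · rfl
  · funext ω
    exact wrrtDepth_congr fun k hk => by simp [hk.trans_lt hjn]

variable [IsProbabilityMeasure μ] {t : ℝ}

theorem ae_parent_mem (ht : 0 < t) (hp : ∀ n, Measurable (p n))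
    (hroot : ∀ n : ℕ, μ {ω | p n ω = none} = ENNReal.ofReal (t / (n + t)))
    (hparent : ∀ n : ℕ, ∀ j < n, μ {ω | p n ω = some j} = ENNReal.ofReal (1 / (n + t)))
    (n : ℕ) : ∀ᵐ ω ∂μ, p n ω ∈ insert none ((Finset.range n).image some) := by
  change ∀ᵐ ω ∂μ, ω ∈ p n ⁻¹' ↑(insert none ((Finset.range n).image some))
  rw [ae_mem_iff_measure_eq (hp n (Finset.measurableSet _)).nullMeasurableSet, measure_univ,
    ← sum_measure_preimage_singleton _ fun _ _ => hp n (measurableSet_singleton _),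
    Finset.sum_insert (by simp), Finset.sum_image (by simp)]
  simp only [Set.preimage, Set.mem_singleton_iff]
  rw [hroot, Finset.sum_congr rfl fun j hj => hparent n j (Finset.mem_range.mp hj),
    Finset.sum_const, Finset.card_range, nsmul_eq_mul, ← ENNReal.ofReal_natCast,
    ← ENNReal.ofReal_mul n.cast_nonneg, ← ENNReal.ofReal_add (by positivity) (by positivity),
    ← ENNReal.ofReal_one]
  congr 1
  field_simp
  ring

theorem integral_pow_wrrtDepth (ht : 0 < t) (hp : ∀ n, Measurable (p n))
    (hroot : ∀ n : ℕ, μ {ω | p n ω = none} = ENNReal.ofReal (t / (n + t)))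
    (hparent : ∀ n : ℕ, ∀ j < n, μ {ω | p n ω = some j} = ENNReal.ofReal (1 / (n + t)))
    (hindep : iIndepFun (m := fun _ : ℕ => (inferInstance : MeasurableSpace (Option ℕ))) p μ)
    (r : ℝ) (n : ℕ) :
    ∫ ω, r ^ wrrtDepth (fun k => p k ω) n ∂μ =
      r * (t / (n + t) + 1 / (n + t) * ∑ j ∈ Finset.range n,
        ∫ ω, r ^ wrrtDepth (fun k => p k ω) j ∂μ) := by
  have hint_indicator : ∀ v,
      Integrable (fun ω => ({v} : Set (Option ℕ)).indicator (1 : Option ℕ → ℝ) (p n ω)) μ :=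
    fun v => (integrable_const 1).indicator (hp n (measurableSet_singleton v))
  have hintegral_indicator : ∀ v,
      ∫ ω, ({v} : Set (Option ℕ)).indicator (1 : Option ℕ → ℝ) (p n ω) ∂μ =
        μ.real {ω | p n ω = v} :=
    fun v => integral_indicator_one (hp n (measurableSet_singleton v))
  have hindep_some : ∀ j < n,
      IndepFun (fun ω => ({some j} : Set (Option ℕ)).indicator (1 : Option ℕ → ℝ) (p n ω))
      (fun ω => r ^ wrrtDepth (fun k => p k ω) j) μ := fun j hj =>
    (indepFun_parent_wrrtDepth hp hindep hj).comp
      (measurable_of_countable (({some j} : Set (Option ℕ)).indicator 1))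
      (measurable_of_countable fun d : ℕ => r ^ d)
  have hint_some : ∀ j ∈ Finset.range n, Integrable (fun ω =>
      ({some j} : Set (Option ℕ)).indicator (1 : Option ℕ → ℝ) (p n ω) *
        r ^ wrrtDepth (fun k => p k ω) j) μ := fun j hj =>
    (hindep_some j (Finset.mem_range.mp hj)).integrable_mul (hint_indicator _)
      (integrable_pow_wrrtDepth hp r j)
  have hintegral_some : ∀ j ∈ Finset.range n, ∫ ω,
      ({some j} : Set (Option ℕ)).indicator (1 : Option ℕ → ℝ) (p n ω) *
        r ^ wrrtDepth (fun k => p k ω) j ∂μ =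
      1 / (n + t) * ∫ ω, r ^ wrrtDepth (fun k => p k ω) j ∂μ := fun j hj => by
    have hjn := Finset.mem_range.mp hj
    refine ((hindep_some j hjn).integral_mul_eq_mul_integral
      (hint_indicator _).aestronglyMeasurable
      (integrable_pow_wrrtDepth hp r j).aestronglyMeasurable).trans ?_
    rw [hintegral_indicator, measureReal_def, hparent n j hjn,
      ENNReal.toReal_ofReal (by positivity)]
  rw [integral_congr_ae ((ae_parent_mem ht hp hroot hparent n).mono fun ω =>
      pow_wrrtDepth_eq r (P := fun k => p k ω)),
    integral_const_mul, integral_add (hint_indicator none) (integrable_finsetSum _ hint_some),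
    integral_finsetSum _ hint_some, Finset.sum_congr rfl hintegral_some, ← Finset.mul_sum,
    hintegral_indicator, measureReal_def, hroot, ENNReal.toReal_ofReal (by positivity)]

theorem wrrtA_eq_sum (hp : ∀ n, Measurable (p n)) (r : ℝ) (n : ℕ) :
    wrrtA μ r p n = ∑ u ∈ Finset.range (n + 1), ∫ ω, r ^ wrrtDepth (fun k => p k ω) u ∂μ :=
  integral_finsetSum _ fun u _ => integrable_pow_wrrtDepth hp r u

theorem wrrtA_eq_sum_mul_prod (ht : 0 < t) (hp : ∀ n, Measurable (p n))
    (hroot : ∀ n : ℕ, μ {ω | p n ω = none} = ENNReal.ofReal (t / (n + t)))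
    (hparent : ∀ n : ℕ, ∀ j < n, μ {ω | p n ω = some j} = ENNReal.ofReal (1 / (n + t)))
    (hindep : iIndepFun (m := fun _ : ℕ => (inferInstance : MeasurableSpace (Option ℕ))) p μ)
    (r : ℝ) (n : ℕ) :
    wrrtA μ r p n = r * ∑ k ∈ Finset.range (n + 1),
      t / ((k : ℝ) + t) * ∏ j ∈ Finset.Ioc k n, (1 + r / ((j : ℝ) + t)) := by
  have hmoment := integral_pow_wrrtDepth ht hp hroot hparent hindep r
  have h0 : wrrtA μ r p 0 = r * (t / ((0 : ℕ) + t)) := by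
    rw [wrrtA_eq_sum hp, Finset.sum_range_one, hmoment, Finset.range_zero, Finset.sum_empty,
      mul_zero, add_zero]
  have hsucc : ∀ n, wrrtA μ r p (n + 1) =
      (1 + r / ((n + 1 : ℕ) + t)) * wrrtA μ r p n + r * (t / ((n + 1 : ℕ) + t)) := fun n => by
    rw [wrrtA_eq_sum hp, Finset.sum_range_succ, hmoment (n + 1), ← wrrtA_eq_sum hp]
    ring
  rw [eq_sum_mul_prod_Ioc_of_rec (c := fun j => 1 + r / ((j : ℕ) + t))
    (d := fun k => r * (t / ((k : ℕ) + t))) h0 hsucc, Finset.mul_sum]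
  simp only [mul_assoc]

end RandomTree

/-- **Equation (3.9).** The closed form for `A_n(r)`:
`A_n(r) = r ∑_{k=0}^n (t/(k+t)) ∏_{j=k+1}^n (1 + r/(j+t))
        = r t ∑_{k=0}^n [Γ(n+1+t+r)/Γ(n+1+t)]·[Γ(k+t)/Γ(k+1+t+r)]`. -/
theorem wrrt_A_closed_form
    {Ω : Type*} [MeasurableSpace Ω] (μ : Measure Ω) [IsProbabilityMeasure μ]
    (t r : ℝ) (ht : 0 < t) (hr : r ∈ Set.Ioo (0 : ℝ) 1)
    -- `p n` is the (random) parent of the vertex `w n` of the weighted random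
    -- recursive tree with root weight `t`:
    (p : ℕ → Ω → Option ℕ) (hpmeas : ∀ n, Measurable (p n))
    (hroot : ∀ n : ℕ, μ {ω | p n ω = none} = ENNReal.ofReal (t / (n + t)))
    (hparent : ∀ n : ℕ, ∀ j < n, μ {ω | p n ω = some j} = ENNReal.ofReal (1 / (n + t)))
    (hindep : iIndepFun (m := fun _ : ℕ => (inferInstance : MeasurableSpace (Option ℕ))) p μ)
    :
    ∀ n : ℕ,
      wrrtA μ r p n =
        r * ∑ k ∈ Finset.range (n + 1),
          (t / ((k : ℝ) + t)) * ∏ j ∈ Finset.Ioc k n, (1 + r / ((j : ℝ) + t)) ∧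
      wrrtA μ r p n =
        r * t * ∑ k ∈ Finset.range (n + 1),
          (Real.Gamma ((n : ℝ) + 1 + t + r) / Real.Gamma ((n : ℝ) + 1 + t)) *
            (Real.Gamma ((k : ℝ) + t) / Real.Gamma ((k : ℝ) + 1 + t + r)) := by
  intro n
  have hprod := wrrtA_eq_sum_mul_prod ht hpmeas hroot hparent hindep r n
  refine ⟨hprod, hprod.trans ?_⟩
  rw [mul_assoc, Finset.mul_sum _ _ t]
  refine congrArg (r * ·) (Finset.sum_congr rfl fun k hk => ?_)
  exact div_mul_prod_one_add_div_eq_Gamma ht hr.1.le (Finset.mem_range_succ_iff.mp hk)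
end
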